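/- Let m ≥ 1, let A be an invertible m × m real matrix, let p, r, w, s, b₃ ∈ ℝᵐ be vectors, and let b₁, b₂ be real scalars. Set u = A⁻¹.mulVec b₃, v = A⁻¹.mulVec p, z = A⁻¹.mulVec r, and suppose w ⬝ᵥ v ≠ 0 and (s ⬝ᵥ z) − ((s ⬝ᵥ v)/(w ⬝ᵥ v))·(w ⬝ᵥ z) ≠ 0. Define q = ((s ⬝ᵥ u) − b₂ − ((s ⬝ᵥ v)/(w ⬝ᵥ v))·((w ⬝ᵥ u) − b₁)) / ((s ⬝ᵥ z) − ((s ⬝ᵥ v)/(w ⬝ᵥ v))·(w ⬝ᵥ z)), t = ((w ⬝ᵥ u) − b₁)/(w ⬝ᵥ v) − ((w ⬝ᵥ z)/(w ⬝ᵥ v))·q, and x₁ = u − t • v − q • z. Then A.mulVec x₁ + t • p + q • r = b₃, (w ⬝ᵥ A⁻¹.mulVec b₃) − (w ⬝ᵥ A⁻¹.mulVec p)·t − (w ⬝ᵥ A⁻¹.mulVec r)·q = b₁, and (s ⬝ᵥ A⁻¹.mulVec b₃) − (s ⬝ᵥ A⁻¹.mulVec p)·t − (s ⬝ᵥ A⁻¹.mulVec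 r)·q = b₂. -/
import Mathlib


open Matrix

theorem fast_algorithm_correct
    (m : ℕ) (hm : 1 ≤ m) (A : Matrix (Fin m) (Fin m) ℝ) (hA : IsUnit A)
    (p r w s b₃ : Fin m → ℝ) (b₁ b₂ : ℝ)
    (u v z : Fin m → ℝ)
    (hu : u = A⁻¹.mulVec b₃) (hv : v = A⁻¹.mulVec p) (hz : z = A⁻¹.mulVec r)
    (hwv : w ⬝ᵥ v ≠ 0)
    (hden : (s ⬝ᵥ z) - ((s ⬝ᵥ v) / (w ⬝ᵥ v)) * (w ⬝ᵥ z) ≠ 0)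
    (q t : ℝ) (x₁ : Fin m → ℝ)
    (hq : q = ((s ⬝ᵥ u) - b₂ - ((s ⬝ᵥ v) / (w ⬝ᵥ v)) * ((w ⬝ᵥ u) - b₁)) /
      ((s ⬝ᵥ z) - ((s ⬝ᵥ v) / (w ⬝ᵥ v)) * (w ⬝ᵥ z)))
    (ht : t = ((w ⬝ᵥ u) - b₁) / (w ⬝ᵥ v) - ((w ⬝ᵥ z) / (w ⬝ᵥ v)) * q)
    (hx₁ : x₁ = u - t • v - q • z) :
    A.mulVec x₁ + t • p + q • r = b₃ ∧
      (w ⬝ᵥ A⁻¹.mulVec b₃) - (w ⬝ᵥ A⁻¹.mulVec p) * t - (w ⬝ᵥ A⁻¹.mulVec r) * q = b₁ ∧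
      (s ⬝ᵥ A⁻¹.mulVec b₃) - (s ⬝ᵥ A⁻¹.mulVec p) * t - (s ⬝ᵥ A⁻¹.mulVec r) * q = b₂ := by
  have hdet : IsUnit A.det := (Matrix.isUnit_iff_isUnit_det A).mp hA
  have hAAinv : ∀ x : Fin m → ℝ, A.mulVec (A⁻¹.mulVec x) = x := by
    intro x
    rw [Matrix.mulVec_mulVec, Matrix.mul_nonsing_inv A hdet, Matrix.one_mulVec]
  -- q equation
  have hqe : q * ((s ⬝ᵥ z) - ((s ⬝ᵥ v) / (w ⬝ᵥ v)) * (w ⬝ᵥ z)) =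
      (s ⬝ᵥ u) - b₂ - ((s ⬝ᵥ v) / (w ⬝ᵥ v)) * ((w ⬝ᵥ u) - b₁) := by
    rw [hq, div_mul_cancel₀ _ hden]
  have h2 : (w ⬝ᵥ u) - (w ⬝ᵥ v) * t - (w ⬝ᵥ z) * q = b₁ := by
    rw [ht]; field_simp; ring
  have h3 : (s ⬝ᵥ u) - (s ⬝ᵥ v) * t - (s ⬝ᵥ z) * q = b₂ := by
    rw [ht]
    have := hqe
    field_simp at this ⊢
    linarith [this]
  refine ⟨?_, by rw [← hu, ← hv, ← hz]; exact h2, by rw [← hu, ← hv, ← hz]; exact h3⟩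
  rw [hx₁, sub_eq_add_neg, sub_eq_add_neg, Matrix.mulVec_add, Matrix.mulVec_add,
    Matrix.mulVec_neg, Matrix.mulVec_neg, Matrix.mulVec_smul, Matrix.mulVec_smul,
    hu, hv, hz, hAAinv, hAAinv, hAAinv]
  abel
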